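/- Let m ≥ 2 be an integer, λ > 0 a real with ω := λ·m ≥ 2, and consider the complete graph K_m on m vertices. For each edge (s,t) of K_m, let G^{st} be K_m with edge (s,t) removed, and let θ^{st} be the parameter vector with entries λ on every edge of G^{st} and 0 elsewhere. Then for all distinct edges (s,t) ≠ (u,v) of K_m, the symmetrized Kullback–Leibler divergence satisfies S(θ^{st}‖θ^{uv}) ≤ 16 ω exp(5λ/2) sinh(λ) / exp(ω/2). -/

import Mathlib

open scoped Classical BigOperators
open Real

noncomputable section

/-- Sign of a Boolean spin: `true ↦ 1`, `false ↦ -1`. -/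
def sgn (b : Bool) : ℝ := if b then 1 else -1

/-- Ising energy `Σ_{s<t} θ_{st} x_s x_t`. -/
def energy {p : ℕ} (θ : Fin p → Fin p → ℝ) (x : Fin p → Bool) : ℝ :=
  ∑ s : Fin p, ∑ t : Fin p, if s < t then θ s t * sgn (x s) * sgn (x t) else 0

/-- Partition function `Z(θ)`. -/
def Zpart {p : ℕ} (θ : Fin p → Fin p → ℝ) : ℝ :=
  ∑ x : Fin p → Bool, Real.exp (energy θ x)

/-- Ising probability mass function `P_θ`. -/
def isingP {p : ℕ} (θ : Fin p → Fin p → ℝ) (x : Fin p → Bool) : ℝ :=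
  Real.exp (energy θ x) / Zpart θ

/-- Probability of an event under `n` i.i.d. samples from `P_θ`. -/
def probn {p : ℕ} (n : ℕ) (θ : Fin p → Fin p → ℝ)
    (A : (Fin n → Fin p → Bool) → Prop) : ℝ :=
  ∑ xs : Fin n → Fin p → Bool, if A xs then ∏ i, isingP θ (xs i) else 0

/-- Probability of a single-sample event under `P_θ`. -/
def prob1 {p : ℕ} (θ : Fin p → Fin p → ℝ) (A : (Fin p → Bool) → Prop) : ℝ :=
  ∑ x : Fin p → Bool, if A x then isingP θ x else 0

/-- A parameter vector: symmetric array vanishing on the diagonal. -/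
def IsSymParam {p : ℕ} (θ : Fin p → Fin p → ℝ) : Prop :=
  (∀ s t, θ s t = θ t s) ∧ (∀ s, θ s s = 0)

/-- The class `Θ_{λ,ω}(G)` of admissible parameter vectors for graph `G`. -/
def ParamClass {p : ℕ} (G : SimpleGraph (Fin p)) (lam om : ℝ)
    (θ : Fin p → Fin p → ℝ) : Prop :=
  IsSymParam θ ∧ (∀ s t : Fin p, ¬ G.Adj s t → θ s t = 0) ∧
    (∀ s t : Fin p, G.Adj s t → lam ≤ |θ s t|) ∧
    (∀ s : Fin p, (∑ t : Fin p, |θ s t|) ≤ om)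

/-- The class `G_{p,d}` of graphs with maximum degree at most `d`. -/
def degClass (p d : ℕ) : Set (SimpleGraph (Fin p)) :=
  {G | ∀ v : Fin p, ({u | G.Adj v u}).ncard ≤ d}

/-- The class `G_{p,k}` of graphs with at most `k` edges. -/
def edgeClass (p k : ℕ) : Set (SimpleGraph (Fin p)) :=
  {G | G.edgeSet.ncard ≤ k}

/-- Kullback–Leibler divergence `D(θ‖θ')` between Ising models. -/
def KLdiv {p : ℕ} (θ θ' : Fin p → Fin p → ℝ) : ℝ :=
  ∑ x : Fin p → Bool, isingP θ x * Real.log (isingP θ x / isingP θ' x)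

/-- Symmetrized KL divergence `S(θ‖θ')`. -/
def symKL {p : ℕ} (θ θ' : Fin p → Fin p → ℝ) : ℝ := KLdiv θ θ' + KLdiv θ' θ

/-- The divergence `J(θ‖θ') = D((θ+θ')/2‖θ) + D((θ+θ')/2‖θ')`. -/
def Jdiv {p : ℕ} (θ θ' : Fin p → Fin p → ℝ) : ℝ :=
  KLdiv (fun s t => (θ s t + θ' s t) / 2) θ +
    KLdiv (fun s t => (θ s t + θ' s t) / 2) θ'

/-- Mean parameter `μ_{st}(θ) = E_θ[X_s X_t]`. -/
def meanPar {p : ℕ} (θ : Fin p → Fin p → ℝ) (s t : Fin p) : ℝ :=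
  ∑ x : Fin p → Bool, isingP θ x * (sgn (x s) * sgn (x t))

/-!
Both models are the Curie–Weiss model on `K_m` (all couplings `λ`, energy `λ (M² - m) / 2` with
`M = Σ x_a` the magnetization) with the single term `λ x_s x_t` removed. As
`S(θ‖θ') = Σ (P_θ - P_θ') (E_θ - E_θ')`, this gives
`S(θ^{st}‖θ^{uv}) ≤ 2λ (P_{θ^{st}}(x_s ≠ x_t) + P_{θ^{uv}}(x_u ≠ x_v))`, and, the energies being
within `λ` of the Curie–Weiss energy, each probability is at most `e^{2λ}` times its Curie–Weiss
counterpart. Under Curie–Weiss, a configuration with `x_s ≠ x_t` either has `4M² ≤ m²`, costing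
a factor `e^{-3λm²/8}` against the all-plus configuration (at most `2^m` such configurations), or
one of `x_s, x_t` opposes a large majority, and flipping that spin raises the energy by `λm`.
For `λm ≥ 2` both contributions are `O(e^{-λm/2})`.
-/

section IsingModel

variable {p : ℕ}

lemma sgn_mul_self (b : Bool) : sgn b * sgn b = 1 := by
  cases b <;> norm_num [sgn]

lemma sgn_mul_sgn (b c : Bool) : sgn b * sgn c = 1 - 2 * if b ≠ c then 1 else 0 := by
  cases b <;> cases c <;> norm_num [sgn]

lemma Zpart_pos (θ : Fin p → Fin p → ℝ) : 0 < Zpart θ :=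
  Finset.sum_pos (fun _ _ => exp_pos _) Finset.univ_nonempty

lemma isingP_pos (θ : Fin p → Fin p → ℝ) (x : Fin p → Bool) : 0 < isingP θ x :=
  div_pos (exp_pos _) (Zpart_pos θ)

lemma sum_isingP (θ : Fin p → Fin p → ℝ) : ∑ x, isingP θ x = 1 := by
  simp only [isingP]
  rw [← Finset.sum_div, ← Zpart, div_self (Zpart_pos θ).ne']

lemma isingP_le_one (θ : Fin p → Fin p → ℝ) (x : Fin p → Bool) : isingP θ x ≤ 1 :=
  sum_isingP θ ▸ Finset.single_le_sum (fun y _ => (isingP_pos θ y).le) (Finset.mem_univ x)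

lemma prob1_nonneg (θ : Fin p → Fin p → ℝ) (A : (Fin p → Bool) → Prop) :
    0 ≤ prob1 θ A :=
  Finset.sum_nonneg fun x _ => by split_ifs <;> simp [(isingP_pos θ x).le]

lemma prob1_le_add (θ : Fin p → Fin p → ℝ) {A B C : (Fin p → Bool) → Prop}
    (h : ∀ x, A x → B x ∨ C x) : prob1 θ A ≤ prob1 θ B + prob1 θ C := by
  rw [prob1, prob1, prob1, ← Finset.sum_add_distrib]
  refine Finset.sum_le_sum fun x _ => ?_
  have := (isingP_pos θ x).le
  by_cases hA : A x
  · rcases h x hA with hB | hC <;> split_ifs <;> simp_all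
  · split_ifs <;> simp_all

lemma meanPar_eq_one_sub_two_mul_prob1 (θ : Fin p → Fin p → ℝ) (s t : Fin p) :
    meanPar θ s t = 1 - 2 * prob1 θ (fun x => x s ≠ x t) := by
  simp only [meanPar, prob1, sgn_mul_sgn, mul_sub, mul_one, Finset.sum_sub_distrib, sum_isingP,
    Finset.mul_sum]
  congr 1
  refine Finset.sum_congr rfl fun x _ => ?_
  split_ifs <;> ring

lemma log_isingP_div_isingP (θ θ' : Fin p → Fin p → ℝ) (x : Fin p → Bool) :
    log (isingP θ x / isingP θ' x)
      = energy θ x - energy θ' x + (log (Zpart θ') - log (Zpart θ)) := by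
  have := Zpart_pos θ
  have := Zpart_pos θ'
  rw [log_div (isingP_pos θ x).ne' (isingP_pos θ' x).ne', isingP, isingP,
    log_div (exp_pos _).ne' (by positivity), log_div (exp_pos _).ne' (by positivity),
    log_exp, log_exp]
  ring

lemma KLdiv_eq (θ θ' : Fin p → Fin p → ℝ) :
    KLdiv θ θ' = ∑ x, isingP θ x * (energy θ x - energy θ' x)
      + (log (Zpart θ') - log (Zpart θ)) := by
  simp only [KLdiv, log_isingP_div_isingP, mul_add, Finset.sum_add_distrib, ← Finset.sum_mul,
    sum_isingP, one_mul]

lemma symKL_eq_sum (θ θ' : Fin p → Fin p → ℝ) :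
    symKL θ θ' = ∑ x, (isingP θ x - isingP θ' x) * (energy θ x - energy θ' x) := by
  rw [symKL, KLdiv_eq, KLdiv_eq]
  simp only [sub_mul, Finset.sum_sub_distrib, mul_sub]
  ring

lemma isingP_le_exp_mul_isingP {θ θ' : Fin p → Fin p → ℝ} {c : ℝ}
    (h : ∀ x, |energy θ x - energy θ' x| ≤ c) (x : Fin p → Bool) :
    isingP θ x ≤ exp (2 * c) * isingP θ' x := by
  have hup : ∀ y, exp (energy θ y) ≤ exp c * exp (energy θ' y) := fun y => by
    rw [← exp_add]; exact exp_le_exp.2 (by linarith [(abs_le.1 (h y)).2])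
  have hlo : ∀ y, exp (-c) * exp (energy θ' y) ≤ exp (energy θ y) := fun y => by
    rw [← exp_add]; exact exp_le_exp.2 (by linarith [(abs_le.1 (h y)).1])
  have hZ : exp (-c) * Zpart θ' ≤ Zpart θ := by
    rw [Zpart, Zpart, Finset.mul_sum]; exact Finset.sum_le_sum fun y _ => hlo y
  have := Zpart_pos θ'
  calc isingP θ x ≤ exp c * exp (energy θ' x) / (exp (-c) * Zpart θ') :=
        div_le_div₀ (by positivity) (hup x) (by positivity) hZ
    _ = exp (2 * c) * isingP θ' x := by
        rw [isingP, two_mul, exp_add, exp_neg]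
        field_simp

lemma prob1_le_exp_mul_prob1 {θ θ' : Fin p → Fin p → ℝ} {c : ℝ}
    (h : ∀ x, |energy θ x - energy θ' x| ≤ c) (A : (Fin p → Bool) → Prop) :
    prob1 θ A ≤ exp (2 * c) * prob1 θ' A := by
  rw [prob1, prob1, Finset.mul_sum]
  refine Finset.sum_le_sum fun x _ => ?_
  split_ifs
  · exact isingP_le_exp_mul_isingP h x
  · simp

lemma isingP_le_exp_neg_mul_isingP (θ : Fin p → Fin p → ℝ) {x y : Fin p → Bool} {c : ℝ}
    (h : energy θ x + c ≤ energy θ y) : isingP θ x ≤ exp (-c) * isingP θ y := by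
  rw [isingP, isingP, mul_div_assoc', ← exp_add]
  exact div_le_div_of_nonneg_right (exp_le_exp.2 (by linarith)) (Zpart_pos θ).le

lemma prob1_le_exp_neg_of_perm (θ : Fin p → Fin p → ℝ) (A : (Fin p → Bool) → Prop)
    (e : Equiv.Perm (Fin p → Bool)) (c : ℝ)
    (h : ∀ x, A x → energy θ x + c ≤ energy θ (e x)) :
    prob1 θ A ≤ exp (-c) := by
  calc prob1 θ A ≤ ∑ x, exp (-c) * isingP θ (e x) := by
        refine Finset.sum_le_sum fun x _ => ?_
        split_ifs with hA
        · exact isingP_le_exp_neg_mul_isingP θ (h x hA)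
        · exact (mul_pos (exp_pos _) (isingP_pos θ _)).le
    _ = exp (-c) := by
        rw [← Finset.mul_sum, Equiv.sum_comp e (isingP θ), sum_isingP, mul_one]

lemma prob1_le_of_energy_le (θ : Fin p → Fin p → ℝ) (A : (Fin p → Bool) → Prop)
    (x₀ : Fin p → Bool) (c : ℝ) (h : ∀ x, A x → energy θ x + c ≤ energy θ x₀) :
    prob1 θ A ≤ 2 ^ p * exp (-c) := by
  calc prob1 θ A ≤ ∑ _x : Fin p → Bool, exp (-c) * isingP θ x₀ := by
        refine Finset.sum_le_sum fun x _ => ?_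
        split_ifs with hA
        · exact isingP_le_exp_neg_mul_isingP θ (h x hA)
        · exact (mul_pos (exp_pos _) (isingP_pos θ _)).le
    _ ≤ ∑ _x : Fin p → Bool, exp (-c) := by
        gcongr
        exact mul_le_of_le_one_right (exp_pos _).le (isingP_le_one θ x₀)
    _ = 2 ^ p * exp (-c) := by simp

lemma energy_eq_half_sum {θ : Fin p → Fin p → ℝ} (hθ : IsSymParam θ) (x : Fin p → Bool) :
    energy θ x = (∑ a, ∑ b, θ a b * sgn (x a) * sgn (x b)) / 2 := by
  set f : Fin p → Fin p → ℝ := fun a b => θ a b * sgn (x a) * sgn (x b)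
  have split : ∀ a b, f a b = (if a < b then f a b else 0) + (if b < a then f b a else 0) := by
    intro a b
    rcases lt_trichotomy a b with h | rfl | h
    · simp [h, h.not_gt]
    · simp [f, hθ.2]
    · simp only [h, h.not_gt, if_true, if_false, zero_add, f, hθ.1 a b]
      ring
  have swap : ∑ a, ∑ b, (if b < a then f b a else 0) = energy θ x := Finset.sum_comm
  change energy θ x = (∑ a, ∑ b, f a b) / 2
  rw [Finset.sum_congr rfl fun a _ => Finset.sum_congr rfl fun b _ => split a b]
  simp only [Finset.sum_add_distrib, swap]
  rw [energy]
  ring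

end IsingModel

section CurieWeiss

variable {m : ℕ}

def completeParam (lam : ℝ) : Fin m → Fin m → ℝ := fun a b => if a ≠ b then lam else 0

def magnet (x : Fin m → Bool) : ℝ := ∑ a, sgn (x a)

lemma isSymParam_completeParam (lam : ℝ) : IsSymParam (completeParam (m := m) lam) :=
  ⟨fun a b => by simp [completeParam, eq_comm], fun a => by simp [completeParam]⟩

lemma energy_completeParam (lam : ℝ) (x : Fin m → Bool) :
    energy (completeParam lam) x = lam * (magnet x ^ 2 - m) / 2 := by
  have term : ∀ a b, completeParam lam a b * sgn (x a) * sgn (x b)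
      = lam * (sgn (x a) * sgn (x b)) - if a = b then lam else 0 := by
    intro a b
    by_cases h : a = b
    · subst h; simp [completeParam, sgn_mul_self]
    · simp only [completeParam, ne_eq, h, not_false_eq_true, if_true, if_false]
      ring
  rw [energy_eq_half_sum (isSymParam_completeParam lam)]
  simp only [term, Finset.sum_sub_distrib, ← Finset.mul_sum, Finset.sum_ite_eq, Finset.mem_univ,
    if_true, Finset.sum_const, Finset.card_univ, Fintype.card_fin, nsmul_eq_mul]
  rw [magnet, sq, Finset.sum_mul]
  ring

lemma magnet_const_true : magnet (fun _ : Fin m => true) = m := by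
  simp [magnet, sgn]

def flipAt (a : Fin m) : Equiv.Perm (Fin m → Bool) :=
  Function.Involutive.toPerm (fun x => Function.update x a (!x a)) fun x => by simp

@[simp]
lemma flipAt_apply (a : Fin m) (x : Fin m → Bool) : flipAt a x = Function.update x a (!x a) :=
  rfl

lemma magnet_flipAt (a : Fin m) (x : Fin m → Bool) :
    magnet (flipAt a x) = magnet x - 2 * sgn (x a) := by
  have diff : ∀ c, sgn (flipAt a x c) = sgn (x c) - if c = a then 2 * sgn (x a) else 0 := by
    intro c
    by_cases h : c = a
    · subst h; cases hc : x c <;> norm_num [hc, sgn]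
    · simp [h]
  simp only [magnet, diff, Finset.sum_sub_distrib, Finset.sum_ite_eq', Finset.mem_univ, if_true]

-- The event that spin `a` sits against a majority of margin at least `m - 2`.
lemma prob1_completeParam_minority_le {lam : ℝ} (hlam : 0 ≤ lam) (a : Fin m) :
    prob1 (completeParam lam) (fun x => (m : ℝ) - 2 ≤ -2 * sgn (x a) * magnet x)
      ≤ exp (-(lam * m)) := by
  refine prob1_le_exp_neg_of_perm _ _ (flipAt a) _ fun x hx => ?_
  rw [energy_completeParam, energy_completeParam, magnet_flipAt]
  nlinarith [mul_le_mul_of_nonneg_left hx hlam, sgn_mul_self (x a)]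

lemma prob1_completeParam_balanced_le {lam : ℝ} (hlam : 0 ≤ lam) :
    prob1 (completeParam (m := m) lam) (fun x => 4 * magnet x ^ 2 ≤ (m : ℝ) ^ 2)
      ≤ 2 ^ m * exp (-(3 * lam * m ^ 2 / 8)) := by
  refine prob1_le_of_energy_le _ _ (fun _ => true) _ fun x hx => ?_
  rw [energy_completeParam, energy_completeParam, magnet_const_true]
  nlinarith [mul_le_mul_of_nonneg_left hx hlam]

lemma prob1_completeParam_disagree_le {lam : ℝ} (hlam : 0 ≤ lam) (s t : Fin m) :
    prob1 (completeParam lam) (fun x => x s ≠ x t)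
      ≤ 2 * exp (-(lam * m)) + 2 ^ m * exp (-(3 * lam * m ^ 2 / 8)) := by
  have cover : ∀ x : Fin m → Bool, x s ≠ x t →
      (m : ℝ) - 2 ≤ -2 * sgn (x s) * magnet x ∨
        ((m : ℝ) - 2 ≤ -2 * sgn (x t) * magnet x ∨ 4 * magnet x ^ 2 ≤ (m : ℝ) ^ 2) := by
    intro x hst
    have opposite : sgn (x t) = -sgn (x s) := by
      cases hs : x s <;> cases ht : x t <;> simp_all [sgn]
    by_contra! h
    obtain ⟨hs, ht, hbal⟩ := h
    rw [opposite] at ht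
    nlinarith [mul_pos (sub_pos.2 hs) (sub_pos.2 ht), sgn_mul_self (x s)]
  calc prob1 (completeParam lam) (fun x => x s ≠ x t)
      ≤ prob1 (completeParam lam) (fun x => (m : ℝ) - 2 ≤ -2 * sgn (x s) * magnet x)
        + (prob1 (completeParam lam) (fun x => (m : ℝ) - 2 ≤ -2 * sgn (x t) * magnet x)
          + prob1 (completeParam lam) (fun x => 4 * magnet x ^ 2 ≤ (m : ℝ) ^ 2)) :=
        (prob1_le_add _ cover).trans (by gcongr; exact prob1_le_add _ fun _ => id)
    _ ≤ exp (-(lam * m)) + (exp (-(lam * m)) + 2 ^ m * exp (-(3 * lam * m ^ 2 / 8))) := by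
        gcongr
        · exact prob1_completeParam_minority_le hlam s
        · exact prob1_completeParam_minority_le hlam t
        · exact prob1_completeParam_balanced_le hlam
    _ = 2 * exp (-(lam * m)) + 2 ^ m * exp (-(3 * lam * m ^ 2 / 8)) := by ring

lemma prob1_completeParam_disagree_le_four_mul_exp {lam : ℝ} (hm : 2 ≤ m) (hlam : 0 ≤ lam)
    (hom : 2 ≤ lam * m) (s t : Fin m) :
    prob1 (completeParam lam) (fun x => x s ≠ x t) ≤ 4 * exp (-(lam * m / 2)) := by
  have hmR : (2 : ℝ) ≤ m := by exact_mod_cast hm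
  have aligned : 2 * exp (-(lam * m)) ≤ exp (-(lam * m / 2)) := by
    have half : exp (-(lam * m / 2)) ≤ 1 / 2 := by
      rw [exp_neg, one_div]
      exact inv_anti₀ two_pos (by linarith [add_one_le_exp (lam * m / 2)])
    have : exp (-(lam * m)) = exp (-(lam * m / 2)) ^ 2 := by
      rw [sq, ← exp_add]; ring_nf
    nlinarith [exp_pos (-(lam * m / 2))]
  -- `m log 2 - 3λm²/8 ≤ 1 - λm/2` because `log 2 < 3/4` and `λm ≥ 2`
  have balanced : (2 : ℝ) ^ m * exp (-(3 * lam * m ^ 2 / 8)) ≤ 3 * exp (-(lam * m / 2)) := by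
    have hlog := log_two_lt_d9
    have hpow : (2 : ℝ) ^ m = exp (m * log 2) := by
      rw [← exp_log (by norm_num : (0 : ℝ) < 2), ← exp_nat_mul, exp_log (by norm_num)]
    calc (2 : ℝ) ^ m * exp (-(3 * lam * m ^ 2 / 8)) ≤ exp 1 * exp (-(lam * m / 2)) := by
          rw [hpow, ← exp_add, ← exp_add, exp_le_exp]
          nlinarith [mul_nonneg (sub_nonneg.2 hmR) (by linarith : 0 ≤ 3 * (lam * m) / 8 - log 2)]
      _ ≤ 3 * exp (-(lam * m / 2)) := by gcongr; linarith [exp_one_lt_d9]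
  linarith [prob1_completeParam_disagree_le hlam s t]

end CurieWeiss

section DeletedEdge

variable {m : ℕ}

def deletedEdgeParam (lam : ℝ) (s t : Fin m) : Fin m → Fin m → ℝ :=
  fun a b => if a ≠ b ∧ ¬((a = s ∧ b = t) ∨ (a = t ∧ b = s)) then lam else 0

lemma isSymParam_deletedEdgeParam (lam : ℝ) (s t : Fin m) :
    IsSymParam (deletedEdgeParam lam s t) := by
  refine ⟨fun a b => ?_, fun a => by simp [deletedEdgeParam]⟩
  simp only [deletedEdgeParam, ne_comm (a := a)]
  congr 3
  exact propext (by tauto)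

lemma energy_deletedEdgeParam {lam : ℝ} {s t : Fin m} (hst : s ≠ t) (x : Fin m → Bool) :
    energy (deletedEdgeParam lam s t) x
      = energy (completeParam lam) x - lam * (sgn (x s) * sgn (x t)) := by
  have term : ∀ a b, deletedEdgeParam lam s t a b * sgn (x a) * sgn (x b)
      = completeParam lam a b * sgn (x a) * sgn (x b)
        - ((if a = s ∧ b = t then lam * (sgn (x a) * sgn (x b)) else 0)
          + if a = t ∧ b = s then lam * (sgn (x a) * sgn (x b)) else 0) := by
    intro a b
    by_cases h1 : a = s ∧ b = t
    · obtain ⟨rfl, rfl⟩ := h1; simp [deletedEdgeParam, completeParam, hst, hst.symm]; ring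
    by_cases h2 : a = t ∧ b = s
    · obtain ⟨rfl, rfl⟩ := h2; simp [deletedEdgeParam, completeParam, hst, hst.symm]; ring
    simp [deletedEdgeParam, completeParam, h1, h2]
  rw [energy_eq_half_sum (isSymParam_deletedEdgeParam lam s t),
    energy_eq_half_sum (isSymParam_completeParam lam)]
  simp only [term, Finset.sum_sub_distrib, Finset.sum_add_distrib, ite_and, Finset.sum_ite_eq',
    Finset.sum_ite_irrel, Finset.mem_univ, if_true, Finset.sum_const_zero]
  ring

lemma prob1_deletedEdgeParam_disagree_le {lam : ℝ} (hm : 2 ≤ m) (hlam : 0 ≤ lam)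
    (hom : 2 ≤ lam * m) {s t : Fin m} (hst : s ≠ t) :
    prob1 (deletedEdgeParam lam s t) (fun x => x s ≠ x t)
      ≤ 4 * exp (2 * lam) * exp (-(lam * m / 2)) := by
  have close :
      ∀ x, |energy (deletedEdgeParam lam s t) x - energy (completeParam lam) x| ≤ lam := by
    intro x
    rw [energy_deletedEdgeParam hst, sub_sub_cancel_left, abs_neg]
    cases x s <;> cases x t <;> simp [sgn, abs_of_nonneg hlam]
  calc prob1 (deletedEdgeParam lam s t) (fun x => x s ≠ x t)
      ≤ exp (2 * lam) * prob1 (completeParam lam) (fun x => x s ≠ x t) :=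
        prob1_le_exp_mul_prob1 close _
    _ ≤ exp (2 * lam) * (4 * exp (-(lam * m / 2))) := by
        gcongr; exact prob1_completeParam_disagree_le_four_mul_exp hm hlam hom s t
    _ = 4 * exp (2 * lam) * exp (-(lam * m / 2)) := by ring

lemma symKL_deletedEdgeParam_le {lam : ℝ} (hlam : 0 ≤ lam) {s t u v : Fin m} (hst : s ≠ t)
    (huv : u ≠ v) :
    symKL (deletedEdgeParam lam s t) (deletedEdgeParam lam u v)
      ≤ 2 * lam * (prob1 (deletedEdgeParam lam s t) (fun x => x s ≠ x t)
        + prob1 (deletedEdgeParam lam u v) (fun x => x u ≠ x v)) := by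
  set θ := deletedEdgeParam lam s t
  set θ' := deletedEdgeParam lam u v
  have expand : symKL θ θ'
      = lam * (meanPar θ u v - meanPar θ s t - meanPar θ' u v + meanPar θ' s t) := by
    rw [symKL_eq_sum]
    simp only [θ, θ', energy_deletedEdgeParam hst, energy_deletedEdgeParam huv, meanPar,
      sub_sub_sub_cancel_left, sub_mul, mul_sub, Finset.sum_sub_distrib]
    simp only [mul_left_comm _ lam, ← Finset.mul_sum]
    ring
  rw [expand, meanPar_eq_one_sub_two_mul_prob1, meanPar_eq_one_sub_two_mul_prob1,
    meanPar_eq_one_sub_two_mul_prob1, meanPar_eq_one_sub_two_mul_prob1]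
  nlinarith [prob1_nonneg θ (fun x => x u ≠ x v), prob1_nonneg θ' (fun x => x s ≠ x t)]

end DeletedEdge

theorem symKL_bound_edge_ensemble_general (m : ℕ) (lam : ℝ)
    (hm : 2 ≤ m) (hlam : 0 < lam) (hom : 2 ≤ lam * (m : ℝ))
    (s t u v : Fin m) (hst : s ≠ t) (huv : u ≠ v)
    (θst θuv : Fin m → Fin m → ℝ)
    (hθst : θst = fun a b =>
      if a ≠ b ∧ ¬((a = s ∧ b = t) ∨ (a = t ∧ b = s)) then lam else 0)
    (hθuv : θuv = fun a b =>
      if a ≠ b ∧ ¬((a = u ∧ b = v) ∨ (a = v ∧ b = u)) then lam else 0) :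
    symKL θst θuv ≤ 16 * (lam * (m : ℝ)) * Real.exp (5 * lam / 2) *
      Real.sinh lam / Real.exp (lam * (m : ℝ) / 2) := by
  change θst = deletedEdgeParam lam s t at hθst
  change θuv = deletedEdgeParam lam u v at hθuv
  subst hθst hθuv
  have hP := prob1_deletedEdgeParam_disagree_le hm hlam.le hom hst
  have hP' := prob1_deletedEdgeParam_disagree_le hm hlam.le hom huv
  have prefactor : lam * exp (2 * lam) ≤ lam * m * exp (5 * lam / 2) * sinh lam := by
    have : lam ≤ lam * m * sinh lam := by
      nlinarith [self_le_sinh_iff.2 hlam.le]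
    have : exp (2 * lam) ≤ exp (5 * lam / 2) := exp_le_exp.2 (by linarith)
    calc lam * exp (2 * lam) ≤ lam * m * sinh lam * exp (5 * lam / 2) := by gcongr
      _ = lam * m * exp (5 * lam / 2) * sinh lam := by ring
  calc symKL (deletedEdgeParam lam s t) (deletedEdgeParam lam u v)
      ≤ 2 * lam * (prob1 (deletedEdgeParam lam s t) (fun x => x s ≠ x t)
        + prob1 (deletedEdgeParam lam u v) (fun x => x u ≠ x v)) :=
        symKL_deletedEdgeParam_le hlam.le hst huv
    _ ≤ 2 * lam * (8 * exp (2 * lam) * exp (-(lam * m / 2))) := by gcongr; linarith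
    _ = 16 * (lam * exp (2 * lam)) / exp (lam * m / 2) := by rw [exp_neg]; ring
    _ ≤ 16 * (lam * m) * exp (5 * lam / 2) * sinh lam / exp (lam * m / 2) :=
        div_le_div_of_nonneg_right (by linarith) (exp_pos _).le

/-- Lemma 5 (Ensemble B for `G_{p,k}`): for the complete graph `K_m` with one edge
removed, uniform weight `λ`, `ω = λm ≥ 2`, the symmetrized KL divergence between
any two distinct models is at most `16 ω e^{5λ/2} sinh(λ) / e^{ω/2}`. -/
theorem symKL_bound_edge_ensemble (m : ℕ) (lam : ℝ)
    (hm : 2 ≤ m) (hlam : 0 < lam) (hom : 2 ≤ lam * (m : ℝ))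
    (s t u v : Fin m) (hst : s ≠ t) (huv : u ≠ v)
    (hdiff : ¬((s = u ∧ t = v) ∨ (s = v ∧ t = u)))
    (θst θuv : Fin m → Fin m → ℝ)
    (hθst : θst = fun a b =>
      if a ≠ b ∧ ¬((a = s ∧ b = t) ∨ (a = t ∧ b = s)) then lam else 0)
    (hθuv : θuv = fun a b =>
      if a ≠ b ∧ ¬((a = u ∧ b = v) ∨ (a = v ∧ b = u)) then lam else 0) :
    symKL θst θuv ≤ 16 * (lam * (m : ℝ)) * Real.exp (5 * lam / 2) *
      Real.sinh lam / Real.exp (lam * (m : ℝ) / 2) :=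
  symKL_bound_edge_ensemble_general m lam hm hlam hom s t u v hst huv θst θuv hθst hθuv
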